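/- Let ℓ ≥ 2 be an integer. Let h₀(x,ξ) := ‖ξ‖²/2 + ‖x‖^{2ℓ}/(2ℓ) and a₂(x,ξ) := x₁ξ₂ − x₂ξ₁ on ℝ² × ℝ². For every (x,ξ) with a₂(x,ξ) ≠ 0 and |a₂(x,ξ)| < (2ℓ h₀(x,ξ)/(ℓ+1))^{(ℓ+1)/(2ℓ)}, define A(x,ξ) := a_r(h₀(x,ξ), a₂(x,ξ)). Then for every λ > 0, the scaled point (λx, λ^ℓ ξ) satisfies the same conditions and A(λx, λ^ℓ ξ) = λ^{ℓ+1} A(x,ξ); that is, the radial action is quasi-homogeneous of degree ℓ+1 as a function of (x,ξ). -/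

import Mathlib

/-!
Under `(x, ξ) ↦ (λx, λ^ℓ ξ)` the energy `h₀` scales by `λ^{2ℓ}` and the angular momentum `a₂`
by `λ^{ℓ+1}`, and `V*_{λ^{ℓ+1} L}(λ r) = λ^{2ℓ} V*_L(r)`. Hence the scaled point stays in the
domain, the two turning points are multiplied by `λ` (they are the only positive roots, and
their order is preserved), and the substitution `r = λ s` in the action integral produces the
factor `λ · λ^ℓ = λ^{ℓ+1}`.
-/

open Real

noncomputable section

abbrev E2 := EuclideanSpace ℝ (Fin 2)
abbrev Phase := E2 × E2

/-- The effective potential `V*_L(r) = L²/(2r²) + r^{2ℓ}/(2ℓ)`. -/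
noncomputable def Veff (ℓ : ℕ) (L r : ℝ) : ℝ :=
  L ^ 2 / (2 * r ^ 2) + r ^ (2 * ℓ) / (2 * (ℓ : ℝ))

/-- The domain `D* = {(E,L) : E > 0, 0 < |L| < (2ℓE/(ℓ+1))^{(ℓ+1)/(2ℓ)}}`. -/
def Dstar (ℓ : ℕ) : Set (ℝ × ℝ) :=
  {q | 0 < q.1 ∧ 0 < |q.2| ∧
    |q.2| < (2 * (ℓ : ℝ) * q.1 / ((ℓ : ℝ) + 1)) ^ (((ℓ : ℝ) + 1) / (2 * (ℓ : ℝ)))}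

/-- The radial action `a_r(E,L) = (√2/π) ∫_{r_m}^{r_M} √(E − V*_L(r)) dr`. -/
noncomputable def aR (ℓ : ℕ) (rm rM : ℝ → ℝ → ℝ) (E L : ℝ) : ℝ :=
  (Real.sqrt 2 / π) * ∫ r in rm E L..rM E L, Real.sqrt (E - Veff ℓ L r)

/-- The anharmonic Hamiltonian `h₀(x,ξ) = ‖ξ‖²/2 + ‖x‖^{2ℓ}/(2ℓ)`. -/
noncomputable def h0fun (ℓ : ℕ) (p : Phase) : ℝ :=
  ‖p.2‖ ^ 2 / 2 + ‖p.1‖ ^ (2 * ℓ) / (2 * (ℓ : ℝ))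

/-- The angular momentum `a₂(x,ξ) = x₁ξ₂ − x₂ξ₁`. -/
noncomputable def a2fun (p : Phase) : ℝ :=
  p.1 0 * p.2 1 - p.1 1 * p.2 0

theorem pow_mul_rpow_div {a x : ℝ} (m : ℕ) {n : ℕ} (hn : n ≠ 0) (ha : 0 ≤ a) (hx : 0 ≤ x) :
    (a ^ n * x) ^ ((m : ℝ) / n) = a ^ m * x ^ ((m : ℝ) / n) := by
  rw [Real.mul_rpow (by positivity) hx, ← Real.rpow_natCast a n, ← Real.rpow_mul ha,
    mul_div_cancel₀ _ (by exact_mod_cast hn), Real.rpow_natCast]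

theorem eq_and_eq_of_lt_of_mem_pair {α : Type*} [Preorder α] {a b a' b' : α} (hab : a < b)
    (h : a' < b') (ha : a' = a ∨ a' = b) (hb : b' = a ∨ b' = b) : a' = a ∧ b' = b := by
  rcases ha with rfl | rfl <;> rcases hb with rfl | rfl
  · exact absurd h (lt_irrefl _)
  · exact ⟨rfl, rfl⟩
  · exact absurd (hab.trans h) (lt_irrefl _)
  · exact absurd h (lt_irrefl _)

theorem Veff_mul_pow (ℓ : ℕ) {lam : ℝ} (hlam : lam ≠ 0) (L r : ℝ) :
    Veff ℓ (lam ^ (ℓ + 1) * L) (lam * r) = lam ^ (2 * ℓ) * Veff ℓ L r := by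
  have hkin : (lam ^ (ℓ + 1) * L) ^ 2 / (2 * (lam * r) ^ 2)
      = lam ^ (2 * ℓ) * (L ^ 2 / (2 * r ^ 2)) := by
    rw [show (lam ^ (ℓ + 1) * L) ^ 2 = lam ^ 2 * (lam ^ (2 * ℓ) * L ^ 2) by ring,
      show 2 * (lam * r) ^ 2 = lam ^ 2 * (2 * r ^ 2) by ring,
      mul_div_mul_left _ _ (pow_ne_zero 2 hlam), mul_div_assoc]
  rw [Veff, Veff, hkin, mul_pow, mul_add, mul_div_assoc]

theorem h0fun_smul (ℓ : ℕ) {lam : ℝ} (hlam : 0 ≤ lam) (p : Phase) :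
    h0fun ℓ (lam • p.1, lam ^ ℓ • p.2) = lam ^ (2 * ℓ) * h0fun ℓ p := by
  simp only [h0fun, norm_smul, Real.norm_eq_abs, abs_of_nonneg hlam,
    abs_of_nonneg (pow_nonneg hlam ℓ)]
  ring

theorem a2fun_smul (ℓ : ℕ) (lam : ℝ) (p : Phase) :
    a2fun (lam • p.1, lam ^ ℓ • p.2) = lam ^ (ℓ + 1) * a2fun p := by
  simp only [a2fun, PiLp.smul_apply, smul_eq_mul]
  ring

theorem h0fun_pos_of_a2fun_ne_zero (ℓ : ℕ) {p : Phase} (ha : a2fun p ≠ 0) :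
    0 < h0fun ℓ p := by
  have hξ : p.2 ≠ 0 := by
    rintro h
    simp [a2fun, h] at ha
  unfold h0fun
  have := norm_pos_iff.mpr hξ
  positivity

theorem mul_pow_mem_Dstar {ℓ : ℕ} (hℓ : ℓ ≠ 0) {lam E L : ℝ} (hlam : 0 < lam)
    (hmem : (E, L) ∈ Dstar ℓ) : (lam ^ (2 * ℓ) * E, lam ^ (ℓ + 1) * L) ∈ Dstar ℓ := by
  obtain ⟨hE, hL, hlt⟩ := hmem
  have hthreshold : (2 * (ℓ : ℝ) * (lam ^ (2 * ℓ) * E) / ((ℓ : ℝ) + 1))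
        ^ (((ℓ : ℝ) + 1) / (2 * (ℓ : ℝ)))
      = lam ^ (ℓ + 1) * (2 * (ℓ : ℝ) * E / ((ℓ : ℝ) + 1)) ^ (((ℓ : ℝ) + 1) / (2 * (ℓ : ℝ))) := by
    have hexp : ((ℓ : ℝ) + 1) / (2 * (ℓ : ℝ)) = ((ℓ + 1 : ℕ) : ℝ) / ((2 * ℓ : ℕ) : ℝ) := by
      push_cast; rfl
    rw [hexp, show 2 * (ℓ : ℝ) * (lam ^ (2 * ℓ) * E) / ((ℓ : ℝ) + 1)
      = lam ^ (2 * ℓ) * (2 * (ℓ : ℝ) * E / ((ℓ : ℝ) + 1)) by ring]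
    exact pow_mul_rpow_div _ (by positivity) hlam.le (by positivity)
  refine ⟨by positivity, ?_, ?_⟩ <;>
    rw [abs_mul, abs_of_pos (pow_pos hlam (ℓ + 1))]
  · positivity
  · rw [hthreshold]
    exact mul_lt_mul_of_pos_left hlt (by positivity)

theorem turningPoints_mul_pow {ℓ : ℕ} (hℓ : ℓ ≠ 0) {rm rM : ℝ → ℝ → ℝ}
    (hroots : ∀ E L : ℝ, (E, L) ∈ Dstar ℓ →
      0 < rm E L ∧ rm E L < rM E L ∧
      Veff ℓ L (rm E L) = E ∧ Veff ℓ L (rM E L) = E ∧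
      ∀ r : ℝ, 0 < r → Veff ℓ L r = E → r = rm E L ∨ r = rM E L)
    {lam E L : ℝ} (hlam : 0 < lam) (hmem : (E, L) ∈ Dstar ℓ) :
    rm (lam ^ (2 * ℓ) * E) (lam ^ (ℓ + 1) * L) = lam * rm E L ∧
    rM (lam ^ (2 * ℓ) * E) (lam ^ (ℓ + 1) * L) = lam * rM E L := by
  obtain ⟨hm, hmM, hVm, hVM, -⟩ := hroots E L hmem
  obtain ⟨-, hmM', -, -, huniq⟩ := hroots _ _ (mul_pow_mem_Dstar hℓ hlam hmem)
  have hroot : ∀ r, 0 < r → Veff ℓ L r = E →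
      lam * r = rm (lam ^ (2 * ℓ) * E) (lam ^ (ℓ + 1) * L) ∨
        lam * r = rM (lam ^ (2 * ℓ) * E) (lam ^ (ℓ + 1) * L) := fun r hr hV =>
    huniq _ (mul_pos hlam hr) (by rw [Veff_mul_pow ℓ hlam.ne', hV])
  obtain ⟨h1, h2⟩ := eq_and_eq_of_lt_of_mem_pair hmM' (mul_lt_mul_of_pos_left hmM hlam)
    (hroot _ hm hVm) (hroot _ (hm.trans hmM) hVM)
  exact ⟨h1.symm, h2.symm⟩

theorem sqrt_mul_pow_sub_Veff (ℓ : ℕ) {lam : ℝ} (hlam : 0 < lam) (E L r : ℝ) :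
    √(lam ^ (2 * ℓ) * E - Veff ℓ (lam ^ (ℓ + 1) * L) (lam * r))
      = lam ^ ℓ * √(E - Veff ℓ L r) := by
  rw [Veff_mul_pow ℓ hlam.ne', ← mul_sub, pow_mul', Real.sqrt_mul (by positivity),
    Real.sqrt_sq (by positivity)]

theorem aR_mul_pow (ℓ : ℕ) {rm rM : ℝ → ℝ → ℝ} {lam E L : ℝ} (hlam : 0 < lam)
    (hrm : rm (lam ^ (2 * ℓ) * E) (lam ^ (ℓ + 1) * L) = lam * rm E L)
    (hrM : rM (lam ^ (2 * ℓ) * E) (lam ^ (ℓ + 1) * L) = lam * rM E L) :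
    aR ℓ rm rM (lam ^ (2 * ℓ) * E) (lam ^ (ℓ + 1) * L) = lam ^ (ℓ + 1) * aR ℓ rm rM E L := by
  rw [aR, aR, hrm, hrM, ← intervalIntegral.smul_integral_comp_mul_left]
  simp only [sqrt_mul_pow_sub_Veff ℓ hlam, intervalIntegral.integral_const_mul, smul_eq_mul]
  ring

theorem stmt7 (ℓ : ℕ) (hℓ : 2 ≤ ℓ) (rm rM : ℝ → ℝ → ℝ)
    (hroots : ∀ E L : ℝ, (E, L) ∈ Dstar ℓ →
      0 < rm E L ∧ rm E L < rM E L ∧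
      Veff ℓ L (rm E L) = E ∧ Veff ℓ L (rM E L) = E ∧
      ∀ r : ℝ, 0 < r → Veff ℓ L r = E → r = rm E L ∨ r = rM E L) :
    ∀ p : Phase, a2fun p ≠ 0 →
      |a2fun p| < (2 * (ℓ : ℝ) * h0fun ℓ p / ((ℓ : ℝ) + 1))
          ^ (((ℓ : ℝ) + 1) / (2 * (ℓ : ℝ))) →
      ∀ lam : ℝ, 0 < lam →
        (a2fun (lam • p.1, lam ^ ℓ • p.2) ≠ 0 ∧
         |a2fun (lam • p.1, lam ^ ℓ • p.2)| <
           (2 * (ℓ : ℝ) * h0fun ℓ (lam • p.1, lam ^ ℓ • p.2) / ((ℓ : ℝ) + 1))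
             ^ (((ℓ : ℝ) + 1) / (2 * (ℓ : ℝ)))) ∧
        aR ℓ rm rM (h0fun ℓ (lam • p.1, lam ^ ℓ • p.2)) (a2fun (lam • p.1, lam ^ ℓ • p.2))
          = lam ^ (ℓ + 1) * aR ℓ rm rM (h0fun ℓ p) (a2fun p) := by
  intro p ha hlt lam hlam
  have hℓ0 : ℓ ≠ 0 := by omega
  have hmem : (h0fun ℓ p, a2fun p) ∈ Dstar ℓ :=
    ⟨h0fun_pos_of_a2fun_ne_zero ℓ ha, abs_pos.mpr ha, hlt⟩
  obtain ⟨-, hL, hlt'⟩ := mul_pow_mem_Dstar hℓ0 hlam hmem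
  obtain ⟨hrm, hrM⟩ := turningPoints_mul_pow hℓ0 hroots hlam hmem
  rw [h0fun_smul ℓ hlam.le, a2fun_smul]
  exact ⟨⟨abs_pos.mp hL, hlt'⟩, aR_mul_pow ℓ hlam hrm hrM⟩

end
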